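/- Let d ≥ 1 and let n ∈ ℝ^d with |n| = 1; set n_f = n and n_el = −n, and for z ∈ ℝ^d write z_τ = z − (z·n_f)n_f. Let J be a finite index set with a distinguished element E ∈ J, let α_k ∈ ℝ and p_k, q_k ∈ ℝ for each k ∈ J, let c ≥ 0, let σ, τ be d×d real matrices, let p, p_E ∈ ℝ, let u, ḋ ∈ ℝ^d, and let g_k ∈ ℝ^d for each k ∈ J. Assume the interface conditions: (i) σ n_el − (Σ_{k∈J} α_k p_k) n_el + τ n_f − p n_f = 0; (ii) p_E = p − (τ n_f)·n_f; (iii) g_j · n_el = 0 for every j ∈ J with j ≠ E; (iv) u·n_f + (ḋ − g_E)·n_el = 0; (v) (τ n_f − p n_f)_τ = −c (u − ḋ)_τ. Then for all test vectors w, v ∈ ℝ^d the identity (p n_f − τ n_f)·v + ((Σ_{k∈J} α_k p_k) n_el − σ n_el)·w − Σ_{j∈J} q_j (g_j · n_el) = p_E (v·n_f + w·n_el) + c (u − ḋ)_τ · (v − w)_τ − q_E (u·n_f + ḋ·n_el) holds. -/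

import Mathlib

/-!
By (i), both stress terms are the fluid traction `t = τ n - p n` tested against `v - w`.
Splitting that pairing into tangential and normal parts (`n` is a unit vector), the
Beavers–Joseph–Saffman condition (v) turns the tangential part into the friction term and
(ii) says `t ⬝ᵥ n = -p_E`. By (iii) only the compartment `E` contributes to the flux sum,
and (iv) expresses its flux through `u` and `ḋ`.
-/

open Matrix

section Tangential

variable {ι R : Type*} [Fintype ι] [CommRing R]

def tangential (n z : ι → R) : ι → R := z - (z ⬝ᵥ n) • n

theorem dotProduct_eq_tangential_add_normal {n : ι → R} (hn : n ⬝ᵥ n = 1) (x y : ι → R) :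
    x ⬝ᵥ y = tangential n x ⬝ᵥ tangential n y + (x ⬝ᵥ n) * (y ⬝ᵥ n) := by
  simp only [tangential, sub_dotProduct, dotProduct_sub, smul_dotProduct, dotProduct_smul,
    smul_eq_mul, hn, dotProduct_comm n y]
  ring

end Tangential

theorem interface_terms_rewrite_general (d : ℕ)
    (n : Fin d → ℝ) (hn : n ⬝ᵥ n = 1)
    (J : Type*) [Fintype J] (E : J)
    (α p' q : J → ℝ) (c : ℝ)
    (σ τ : Matrix (Fin d) (Fin d) ℝ)
    (p pE : ℝ) (u dd : Fin d → ℝ) (g : J → (Fin d → ℝ))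
    -- (i) total stress balance
    (hi : σ.mulVec (-n) - (∑ k, α k * p' k) • (-n) + τ.mulVec n - p • n = 0)
    -- (ii) normal stress balance
    (hii : pE = p - (τ.mulVec n) ⬝ᵥ n)
    -- (iii) no flux for compartments j ≠ E
    (hiii : ∀ j : J, j ≠ E → g j ⬝ᵥ (-n) = 0)
    -- (iv) normal flux continuity
    (hiv : u ⬝ᵥ n + (dd - g E) ⬝ᵥ (-n) = 0)
    -- (v) Beavers–Joseph–Saffman condition
    (hv : (τ.mulVec n - p • n) - (((τ.mulVec n - p • n) ⬝ᵥ n) • n)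
            = -(c • ((u - dd) - (((u - dd) ⬝ᵥ n) • n)))) :
    ∀ w v : Fin d → ℝ,
      (p • n - τ.mulVec n) ⬝ᵥ v
        + ((∑ k, α k * p' k) • (-n) - σ.mulVec (-n)) ⬝ᵥ w
        - ∑ j, q j * (g j ⬝ᵥ (-n))
      = pE * (v ⬝ᵥ n + w ⬝ᵥ (-n))
        + c * (((u - dd) - (((u - dd) ⬝ᵥ n) • n)) ⬝ᵥ ((v - w) - (((v - w) ⬝ᵥ n) • n)))
        - q E * (u ⬝ᵥ n + dd ⬝ᵥ (-n)) := by
  intro w v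
  set t := τ.mulVec n - p • n with ht
  have htraction : (∑ k, α k * p' k) • (-n) - σ.mulVec (-n) = t := by
    linear_combination (norm := module) -hi
  have hnormal : t ⬝ᵥ n = -pE := by
    rw [hii, ht, sub_dotProduct, smul_dotProduct, hn, smul_eq_mul, mul_one, neg_sub]
  have hflux : ∑ j, q j * (g j ⬝ᵥ (-n)) = q E * (u ⬝ᵥ n + dd ⬝ᵥ (-n)) := by
    rw [Fintype.sum_eq_single E fun j hj => by rw [hiii j hj, mul_zero]]
    simp only [sub_dotProduct] at hiv
    linear_combination -q E * hiv
  have hsplit := dotProduct_eq_tangential_add_normal hn t (v - w)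
  unfold tangential at hsplit
  rw [hv, hnormal, neg_dotProduct, smul_dotProduct, smul_eq_mul, dotProduct_sub]
    at hsplit
  have hfluid : (p • n - τ.mulVec n) ⬝ᵥ v = -(t ⬝ᵥ v) := by
    rw [ht, ← neg_sub, neg_dotProduct]
  rw [htraction, hflux, hfluid, dotProduct_neg w n]
  linear_combination -hsplit + pE * sub_dotProduct v w n

/-- Rewriting of the interface boundary terms arising from integration by parts,
using the pointwise fluid–poroelastic interface conditions (i)–(v)
(total stress balance, normal stress balance, no flux for compartments `j ≠ E`,
normal flux continuity, Beavers–Joseph–Saffman). Here `n_f = n`, `n_el = −n`,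
and `z_τ = z − (z·n_f) n_f` denotes the tangential part. -/
theorem interface_terms_rewrite (d : ℕ) (hd : 1 ≤ d)
    (n : Fin d → ℝ) (hn : n ⬝ᵥ n = 1)
    (J : Type*) [Fintype J] (E : J)
    (α p' q : J → ℝ) (c : ℝ) (hc : 0 ≤ c)
    (σ τ : Matrix (Fin d) (Fin d) ℝ)
    (p pE : ℝ) (u dd : Fin d → ℝ) (g : J → (Fin d → ℝ))
    -- (i) total stress balance
    (hi : σ.mulVec (-n) - (∑ k, α k * p' k) • (-n) + τ.mulVec n - p • n = 0)
    -- (ii) normal stress balance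
    (hii : pE = p - (τ.mulVec n) ⬝ᵥ n)
    -- (iii) no flux for compartments j ≠ E
    (hiii : ∀ j : J, j ≠ E → g j ⬝ᵥ (-n) = 0)
    -- (iv) normal flux continuity
    (hiv : u ⬝ᵥ n + (dd - g E) ⬝ᵥ (-n) = 0)
    -- (v) Beavers–Joseph–Saffman condition
    (hv : (τ.mulVec n - p • n) - (((τ.mulVec n - p • n) ⬝ᵥ n) • n)
            = -(c • ((u - dd) - (((u - dd) ⬝ᵥ n) • n)))) :
    ∀ w v : Fin d → ℝ,
      (p • n - τ.mulVec n) ⬝ᵥ v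
        + ((∑ k, α k * p' k) • (-n) - σ.mulVec (-n)) ⬝ᵥ w
        - ∑ j, q j * (g j ⬝ᵥ (-n))
      = pE * (v ⬝ᵥ n + w ⬝ᵥ (-n))
        + c * (((u - dd) - (((u - dd) ⬝ᵥ n) • n)) ⬝ᵥ ((v - w) - (((v - w) ⬝ᵥ n) • n)))
        - q E * (u ⬝ᵥ n + dd ⬝ᵥ (-n)) :=
  interface_terms_rewrite_general d n hn J E α p' q c σ τ p pE u dd g hi hii hiii hiv hv
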